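/- For positive semidefinite matrices A and B with Tr(A) + Tr(B) = 1, ‖A-B‖₁² + 4‖A^{1/2}B^{1/2}‖₁² ≤ 1. That is, with T(A,B) = ‖A-B‖₁ and F(A,B) = 2‖A^{1/2}B^{1/2}‖₁, one has T² + F² ≤ 1 (Fuchs–van de Graaf with priors). -/

import Mathlib

open Matrix
open scoped ComplexOrder

/-- The positive semidefinite square root of a positive semidefinite matrix -/
noncomputable def Matrix.PosSemidef.sqrt {𝕜 : Type*} [RCLike 𝕜] {n : Type*} [Fintype n]
    [DecidableEq n] {A : Matrix n n 𝕜} (hA : A.PosSemidef) : Matrix n n 𝕜 :=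
  hA.1.eigenvectorUnitary.1 * diagonal ((↑) ∘ (Real.sqrt ·) ∘ hA.1.eigenvalues) *
  (star hA.1.eigenvectorUnitary : Matrix n n 𝕜)

/-- Trace norm `‖X‖₁ = Tr √(XᴴX)`. -/
noncomputable def traceNorm {n : Type*} [Fintype n] [DecidableEq n] (X : Matrix n n ℂ) : ℝ :=
  ((Matrix.posSemidef_conjTranspose_mul_self X).sqrt.trace).re

/-- Fractional power `A^s` of a positive semidefinite matrix, defined spectrally with the
convention `0 ^ s = 0` for all real `s`. -/
noncomputable def Matrix.PosSemidef.rpow {n : Type*} [Fintype n] [DecidableEq n]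
    {A : Matrix n n ℂ} (hA : A.PosSemidef) (s : ℝ) : Matrix n n ℂ :=
  hA.1.cfc (fun x => if x = 0 then 0 else x ^ s)

/-- Matrix logarithm of a positive semidefinite matrix, defined spectrally with the
convention `log 0 = 0` on the kernel. -/
noncomputable def Matrix.PosSemidef.log {n : Type*} [Fintype n] [DecidableEq n]
    {A : Matrix n n ℂ} (hA : A.PosSemidef) : Matrix n n ℂ :=
  hA.1.cfc Real.log

/-!
Write `C = A^{1/2}`, `D = B^{1/2}` and pick, by polar decomposition, unitaries `U`, `V` with
`Re Tr (U C D) = ‖C D‖₁` and `Re Tr (V (A - B)) = ‖A - B‖₁`. For `P = U C` and `Q = D` we have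
`PᴴP - QᴴQ = A - B` and `2 (PᴴP - QᴴQ) = (P + Q)ᴴ(P - Q) + (P - Q)ᴴ(P + Q)`, so Cauchy–Schwarz for
the Hilbert–Schmidt inner product (realised as the Euclidean one on `toLp 2 X.vec`) gives
`‖A - B‖₁ ≤ ‖P - Q‖₂ ‖P + Q‖₂`, while `‖P ∓ Q‖₂² = Tr A + Tr B ∓ 2 ‖C D‖₁ = 1 ∓ 2 ‖C D‖₁`.
-/

open RCLike WithLp

namespace Matrix

variable {𝕜 : Type*} [RCLike 𝕜] {m n : Type*} [Fintype m] [Fintype n]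

theorem inner_toLp_vec (X Y : Matrix m n 𝕜) :
    inner 𝕜 (toLp 2 X.vec) (toLp 2 Y.vec) = (Xᴴ * Y).trace := by
  rw [EuclideanSpace.inner_toLp_toLp, dotProduct_comm, star_vec_dotProduct_vec]

theorem norm_toLp_vec_sq (X : Matrix m n 𝕜) : ‖toLp 2 X.vec‖ ^ 2 = re (Xᴴ * X).trace := by
  rw [@norm_sq_eq_re_inner 𝕜, inner_toLp_vec]

theorem norm_toLp_vec_mul_unitary [DecidableEq n] {V : Matrix n n 𝕜}
    (hV : V ∈ unitaryGroup n 𝕜) (X : Matrix m n 𝕜) :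
    ‖toLp 2 (X * V).vec‖ = ‖toLp 2 X.vec‖ := by
  rw [← pow_left_inj₀ (norm_nonneg _) (norm_nonneg _) two_ne_zero, norm_toLp_vec_sq,
    norm_toLp_vec_sq, conjTranspose_mul, Matrix.mul_assoc, trace_mul_comm, ← Matrix.mul_assoc,
    Matrix.mul_assoc, ← star_eq_conjTranspose, mem_unitaryGroup_iff.mp hV, Matrix.mul_one]

theorem abs_re_trace_unitary_mul_conjTranspose_mul_le [DecidableEq n] {V : Matrix n n 𝕜}
    (hV : V ∈ unitaryGroup n 𝕜) (X Y : Matrix m n 𝕜) :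
    |re (V * (Xᴴ * Y)).trace| ≤ ‖toLp 2 X.vec‖ * ‖toLp 2 Y.vec‖ := by
  have hVX : V * (Xᴴ * Y) = (X * star V)ᴴ * Y := by
    rw [conjTranspose_mul, star_eq_conjTranspose, conjTranspose_conjTranspose, Matrix.mul_assoc]
  rw [hVX, ← inner_toLp_vec, ← norm_toLp_vec_mul_unitary (Unitary.star_mem hV) X]
  exact (abs_re_le_norm _).trans (norm_inner_le_norm _ _)

theorem re_trace_unitary_mul_sub_sq_add_four_mul_sq_le [DecidableEq n] {V : Matrix n n 𝕜}
    (hV : V ∈ unitaryGroup n 𝕜) (P Q : Matrix m n 𝕜) :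
    re (V * (Pᴴ * P - Qᴴ * Q)).trace ^ 2 + 4 * re (Pᴴ * Q).trace ^ 2 ≤
      (re (Pᴴ * P).trace + re (Qᴴ * Q).trace) ^ 2 := by
  set x := toLp 2 P.vec
  set y := toLp 2 Q.vec
  have hsplit : (Pᴴ * P - Qᴴ * Q) + (Pᴴ * P - Qᴴ * Q) =
      (P + Q)ᴴ * (P - Q) + (P - Q)ᴴ * (P + Q) := by
    simp only [conjTranspose_add, conjTranspose_sub, Matrix.add_mul, Matrix.mul_add,
      Matrix.sub_mul, Matrix.mul_sub]
    abel
  have hbound : |re (V * (Pᴴ * P - Qᴴ * Q)).trace| ≤ ‖x - y‖ * ‖x + y‖ := by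
    have h₁ := abs_re_trace_unitary_mul_conjTranspose_mul_le hV (P + Q) (P - Q)
    have h₂ := abs_re_trace_unitary_mul_conjTranspose_mul_le hV (P - Q) (P + Q)
    have hdouble : re (V * (Pᴴ * P - Qᴴ * Q)).trace + re (V * (Pᴴ * P - Qᴴ * Q)).trace =
        re (V * ((P + Q)ᴴ * (P - Q))).trace + re (V * ((P - Q)ᴴ * (P + Q))).trace := by
      rw [← map_add, ← map_add, ← trace_add, ← trace_add, ← Matrix.mul_add, ← Matrix.mul_add,
        hsplit]
    rw [vec_add, vec_sub, toLp_add, toLp_sub] at h₁ h₂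
    rw [abs_le] at h₁ h₂ ⊢
    constructor <;> linarith [mul_comm ‖x - y‖ ‖x + y‖]
  have hxy : re (inner 𝕜 x y) = re (Pᴴ * Q).trace := by rw [inner_toLp_vec]
  calc re (V * (Pᴴ * P - Qᴴ * Q)).trace ^ 2 + 4 * re (Pᴴ * Q).trace ^ 2
      ≤ (‖x - y‖ * ‖x + y‖) ^ 2 + 4 * re (Pᴴ * Q).trace ^ 2 := by
        grw [sq_le_sq' (abs_le.mp hbound).1 (abs_le.mp hbound).2]
    _ = (re (Pᴴ * P).trace + re (Qᴴ * Q).trace) ^ 2 := by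
        rw [mul_pow, @norm_sub_sq 𝕜, @norm_add_sq 𝕜, norm_toLp_vec_sq, norm_toLp_vec_sq, hxy]
        ring

/-- The columns of `N` are orthogonal with lengths `|s i|`; the normalised nonzero ones extend to an
orthonormal basis, whose vectors are the columns of `U`. -/
theorem exists_unitary_mul_diagonal_of_conjTranspose_mul_self [DecidableEq n]
    {N : Matrix n n 𝕜} {s : n → ℝ} (h : Nᴴ * N = diagonal fun i => ((s i ^ 2 : ℝ) : 𝕜)) :
    ∃ U ∈ unitaryGroup n 𝕜, N = U * diagonal fun i => (s i : 𝕜) := by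
  let col : n → EuclideanSpace 𝕜 n := fun i => toLp 2 fun j => N j i
  have hcol : ∀ i j, inner 𝕜 (col i) (col j) = (Nᴴ * N) i j := fun i j => by
    simp [col, mul_apply, EuclideanSpace.inner_toLp_toLp, dotProduct, mul_comm]
  have hcol_zero : ∀ i, s i = 0 → ∀ j, N j i = 0 := by
    intro i hi j
    have : col i = 0 := by
      rw [← inner_self_eq_zero (𝕜 := 𝕜), hcol, h, diagonal_apply_eq, hi]
      simp
    simpa [col] using congrArg (fun v => v j) this
  let v : n → EuclideanSpace 𝕜 n := fun i => ((s i : 𝕜))⁻¹ • col i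
  have hv : Orthonormal 𝕜 ({i | s i ≠ 0}.domRestrict v) := by
    rw [orthonormal_iff_ite]
    rintro ⟨i, hi⟩ ⟨j, hj⟩
    simp only [Set.domRestrict_apply, v, inner_smul_left, inner_smul_right, hcol, h,
      diagonal_apply, Subtype.mk.injEq]
    split_ifs with hij
    · subst hij
      have : (s i : 𝕜) ≠ 0 := by exact_mod_cast hi
      simp only [conj_ofReal, ofReal_pow, map_inv₀]
      field_simp
    · simp
  obtain ⟨b, hb⟩ := hv.exists_orthonormalBasis_extension_of_card_eq (by simp)
  refine ⟨(EuclideanSpace.basisFun n 𝕜).toBasis.toMatrix b,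
    (EuclideanSpace.basisFun n 𝕜).toMatrix_orthonormalBasis_mem_unitary b, ?_⟩
  ext j i
  rw [mul_diagonal]
  by_cases hi : s i = 0
  · simp [hcol_zero i hi, hi]
  · have hsi : (s i : 𝕜) ≠ 0 := by exact_mod_cast hi
    rw [Module.Basis.toMatrix_apply, OrthonormalBasis.coe_toBasis_repr_apply,
      EuclideanSpace.basisFun_repr, hb i hi]
    simp only [PiLp.smul_apply, smul_eq_mul, v, col]
    field_simp

theorem PosSemidef.isHermitian_sqrt [DecidableEq n] {A : Matrix n n 𝕜} (hA : A.PosSemidef) :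
    hA.sqrt.IsHermitian :=
  isHermitian_mul_mul_conjTranspose _ (isHermitian_diagonal_of_self_adjoint _ (by ext; simp))

theorem PosSemidef.sqrt_mul_sqrt [DecidableEq n] {A : Matrix n n 𝕜} (hA : A.PosSemidef) :
    hA.sqrt * hA.sqrt = A := by
  set V : Matrix n n 𝕜 := (hA.1.eigenvectorUnitary : Matrix n n 𝕜)
  have hV : star V * V = 1 := Unitary.star_mul_self_of_mem hA.1.eigenvectorUnitary.2
  have hD : (diagonal ((↑) ∘ (√·) ∘ hA.1.eigenvalues) : Matrix n n 𝕜) *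
      diagonal ((↑) ∘ (√·) ∘ hA.1.eigenvalues) = diagonal (ofReal ∘ hA.1.eigenvalues) := by
    rw [diagonal_mul_diagonal]
    congr with i
    simp [← ofReal_mul, Real.mul_self_sqrt (hA.eigenvalues_nonneg i)]
  conv_rhs => rw [hA.1.spectral_theorem, Unitary.conjStarAlgAut_apply, ← hD]
  change V * _ * star V * (V * _ * star V) = V * _ * star V
  simp only [Matrix.mul_assoc]
  rw [← Matrix.mul_assoc (star V), hV, Matrix.one_mul]

theorem exists_unitary_mul_sqrt_conjTranspose_mul_self [DecidableEq n] (M : Matrix n n 𝕜) :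
    ∃ W ∈ unitaryGroup n 𝕜, M = W * (posSemidef_conjTranspose_mul_self M).sqrt := by
  set hH := (posSemidef_conjTranspose_mul_self M).1
  set V : Matrix n n 𝕜 := (hH.eigenvectorUnitary : Matrix n n 𝕜)
  have hVV : V * star V = 1 := Unitary.mul_star_self_of_mem hH.eigenvectorUnitary.2
  have hVV' : star V * V = 1 := Unitary.star_mul_self_of_mem hH.eigenvectorUnitary.2
  have hN : (M * V)ᴴ * (M * V) = diagonal fun i => ((√(hH.eigenvalues i) ^ 2 : ℝ) : 𝕜) := by
    convert hH.conjStarAlgAut_star_eigenvectorUnitary using 1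
    · rw [Unitary.conjStarAlgAut_star_apply, conjTranspose_mul, Matrix.mul_assoc,
        ← Matrix.mul_assoc Mᴴ, ← Matrix.mul_assoc]
      rfl
    · congr with i
      rw [Function.comp_apply,
        Real.sq_sqrt ((posSemidef_conjTranspose_mul_self M).eigenvalues_nonneg i)]
  obtain ⟨U, hU, hMV⟩ := exists_unitary_mul_diagonal_of_conjTranspose_mul_self hN
  refine ⟨U * star V, mul_mem hU (Unitary.star_mem hH.eigenvectorUnitary.2), ?_⟩
  calc M = M * V * star V := by rw [Matrix.mul_assoc, hVV, Matrix.mul_one]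
    _ = U * star V * (posSemidef_conjTranspose_mul_self M).sqrt := by
      change _ = U * star V * (V * _ * star V)
      rw [hMV, Matrix.mul_assoc U (star V), ← Matrix.mul_assoc (star V),
        ← Matrix.mul_assoc (star V), hVV', Matrix.one_mul, Matrix.mul_assoc]
      rfl

end Matrix

theorem exists_unitary_re_trace_mul_eq_traceNorm {n : Type*} [Fintype n] [DecidableEq n]
    (M : Matrix n n ℂ) : ∃ U ∈ unitaryGroup n ℂ, (U * M).trace.re = traceNorm M := by
  obtain ⟨W, hW, hM⟩ := exists_unitary_mul_sqrt_conjTranspose_mul_self M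
  refine ⟨star W, Unitary.star_mem hW, ?_⟩
  conv_lhs => rw [hM, ← Matrix.mul_assoc, Unitary.star_mul_self_of_mem hW, Matrix.one_mul]
  rfl

/-- Fuchs–van de Graaf with priors: if `Tr A + Tr B = 1` for positive semidefinite `A`, `B`,
then `‖A-B‖₁² + 4‖A^{1/2}B^{1/2}‖₁² ≤ 1`, i.e. `T² + F² ≤ 1`. -/
theorem stmt4 {n : Type*} [Fintype n] [DecidableEq n]
    {A B : Matrix n n ℂ} (hA : A.PosSemidef) (hB : B.PosSemidef)
    (htr : A.trace + B.trace = 1) :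
    (traceNorm (A - B)) ^ 2 + 4 * (traceNorm (hA.sqrt * hB.sqrt)) ^ 2 ≤ 1 := by
  set C := hA.sqrt
  set D := hB.sqrt
  obtain ⟨U, hU, hF⟩ := exists_unitary_re_trace_mul_eq_traceNorm (C * D)
  obtain ⟨V, hV, hT⟩ := exists_unitary_re_trace_mul_eq_traceNorm (A - B)
  have hP : (U * C)ᴴ * (U * C) = A := by
    rw [conjTranspose_mul, hA.isHermitian_sqrt.eq, Matrix.mul_assoc, ← Matrix.mul_assoc Uᴴ,
      ← star_eq_conjTranspose, Unitary.star_mul_self_of_mem hU, Matrix.one_mul,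
      hA.sqrt_mul_sqrt]
  have hQ : Dᴴ * D = B := by rw [hB.isHermitian_sqrt.eq, hB.sqrt_mul_sqrt]
  have hPQ : ((U * C)ᴴ * D).trace.re = traceNorm (C * D) := by
    have h : (D * (U * C))ᴴ = (U * C)ᴴ * D := by rw [conjTranspose_mul, hB.isHermitian_sqrt.eq]
    rw [← hF, ← h, trace_conjTranspose, trace_mul_comm, Matrix.mul_assoc]
    exact Complex.conj_re _
  have key := re_trace_unitary_mul_sub_sq_add_four_mul_sq_le hV (U * C) D
  simp only [RCLike.re_to_complex] at key
  rwa [hP, hQ, hT, hPQ, ← Complex.add_re, htr, Complex.one_re, one_pow] at key
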